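/- arXiv:2403.04152 — 5 statements merged into one kernel-verified Lean document; each statement's English description precedes it below -/
import Mathlib

section
/- Let f be analytic in the open disk |z| < r with Re f > 0 throughout the disk, and let 0 < p < 1. Then the integral over φ ∈ [0, 2π] of liminf_{z → re^{iφ}, |z|<r} |f(z)|^p dφ is at most (2π / cos(πp/2)) · |f(0)|^p. -/
/-!
As `Re f > 0`, the principal power `f ^ p` is holomorphic and `|arg f| < π / 2`, so
`cos (π p / 2) |f| ^ p ≤ Re (f ^ p)`. The mean value property of `f ^ p` on the circle of radius
`ρ < r` therefore bounds `∫ |f (ρ e^{iφ})| ^ p dφ` by `2π |f 0| ^ p / cos (π p / 2)`, and Fatou's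
lemma along radii `ρ → r` carries this bound over to the boundary `liminf`.
-/

open Complex MeasureTheory Real Filter

open Metric Topology

theorem Complex.cos_mul_norm_rpow_le_re_cpow {z : ℂ} (hz : 0 ≤ z.re) {p : ℝ} (hp0 : 0 ≤ p)
    (hp2 : p ≤ 2) : Real.cos (π * p / 2) * ‖z‖ ^ p ≤ (z ^ (p : ℂ)).re := by
  have harg : |arg z * p| ≤ π * p / 2 := by
    rw [abs_mul, abs_of_nonneg hp0]
    nlinarith [abs_arg_le_pi_div_two_iff.2 hz]
  rw [cpow_ofReal_re, mul_comm, ← Real.cos_abs (arg z * p)]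
  gcongr
  exact Real.cos_le_cos_of_nonneg_of_le_pi (abs_nonneg _) (by nlinarith [pi_pos]) harg

theorem cos_mul_circleAverage_norm_rpow_le {f : ℂ → ℂ} {c : ℂ} {R p : ℝ}
    (hf : DifferentiableOn ℂ f (closedBall c |R|))
    (hre : ∀ z ∈ closedBall c |R|, 0 < (f z).re) (hp0 : 0 ≤ p) (hp2 : p ≤ 2) :
    Real.cos (π * p / 2) * circleAverage (fun z ↦ ‖f z‖ ^ p) c R ≤ ‖f c‖ ^ p := by
  have hpow : DifferentiableOn ℂ (fun z ↦ f z ^ (p : ℂ)) (closedBall c |R|) :=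
    hf.cpow (differentiableOn_const _) fun z hz ↦ mem_slitPlane_iff.2 (Or.inl (hre z hz))
  have hmean : circleAverage (fun z ↦ f z ^ (p : ℂ)) c R = f c ^ (p : ℂ) :=
    DiffContOnCl.circleAverage
      ⟨hpow.mono ball_subset_closedBall, hpow.continuousOn.mono closure_ball_subset_closedBall⟩
  have hsphere : sphere c |R| ⊆ closedBall c |R| := sphere_subset_closedBall
  have hnorm : ContinuousOn (fun z ↦ ‖f z‖ ^ p) (sphere c |R|) :=
    (hf.continuousOn.mono hsphere).norm.rpow_const fun _ _ ↦ Or.inr hp0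
  calc Real.cos (π * p / 2) * circleAverage (fun z ↦ ‖f z‖ ^ p) c R
      = circleAverage (fun z ↦ Real.cos (π * p / 2) * ‖f z‖ ^ p) c R :=
        (circleAverage_fun_smul (a := Real.cos (π * p / 2))).symm
    _ ≤ circleAverage (fun z ↦ (f z ^ (p : ℂ)).re) c R :=
        circleAverage_mono (continuousOn_const.mul hnorm).circleIntegrable'
          (continuous_re.comp_continuousOn (hpow.continuousOn.mono hsphere)).circleIntegrable'
          fun z hz ↦ cos_mul_norm_rpow_le_re_cpow (hre z (hsphere hz)).le hp0 hp2
    _ = (f c ^ (p : ℂ)).re := by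
        rw [← hmean]
        exact reCLM.circleAverage_comp_comm (hpow.continuousOn.mono hsphere).circleIntegrable'
    _ ≤ ‖f c‖ ^ p := (re_le_norm _).trans_eq (norm_cpow_real _ _)

theorem integral_norm_rpow_circleMap_le {f : ℂ → ℂ} {c : ℂ} {R p : ℝ}
    (hf : DifferentiableOn ℂ f (closedBall c |R|))
    (hre : ∀ z ∈ closedBall c |R|, 0 < (f z).re) (hp0 : 0 ≤ p) (hp1 : p < 1) :
    ∫ θ in (0 : ℝ)..2 * π, ‖f (circleMap c R θ)‖ ^ p
      ≤ 2 * π / Real.cos (π * p / 2) * ‖f c‖ ^ p := by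
  have hcos : 0 < Real.cos (π * p / 2) :=
    Real.cos_pos_of_mem_Ioo ⟨by nlinarith [pi_pos], by nlinarith [pi_pos]⟩
  have hmean := cos_mul_circleAverage_norm_rpow_le hf hre hp0 (by linarith)
  rw [circleAverage_def, smul_eq_mul] at hmean
  rw [div_mul_eq_mul_div, le_div_iff₀ hcos, mul_comm _ (Real.cos _)]
  calc Real.cos (π * p / 2) * ∫ θ in (0 : ℝ)..2 * π, ‖f (circleMap c R θ)‖ ^ p
      = 2 * π * (Real.cos (π * p / 2) *
          ((2 * π)⁻¹ * ∫ θ in (0 : ℝ)..2 * π, ‖f (circleMap c R θ)‖ ^ p)) := by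
        field_simp
    _ ≤ 2 * π * ‖f c‖ ^ p := mul_le_mul_of_nonneg_left hmean two_pi_pos.le

-- No boundedness hypotheses are needed: where `liminf u F` is a junk value, it is `0`.
theorem ENNReal.ofReal_liminf_le_liminf_ofReal {α : Type*} {u : α → ℝ} {F : Filter α} :
    ENNReal.ofReal (liminf u F) ≤ liminf (fun x ↦ ENNReal.ofReal (u x)) F := by
  set L := liminf (fun x ↦ ENNReal.ofReal (u x)) F
  rcases eq_or_ne L ⊤ with hL | hL
  · exact hL ▸ le_top
  rw [ENNReal.ofReal_le_iff_le_toReal hL, liminf_eq]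
  refine Real.sSup_le (fun c hc ↦ ?_) ENNReal.toReal_nonneg
  exact (ENNReal.ofReal_le_iff_le_toReal hL).1 <|
    le_liminf_of_le (by isBoundedDefault) (hc.mono fun x hx ↦ ENNReal.ofReal_le_ofReal hx)

theorem MeasureTheory.integral_le_of_ofReal_le_liminf {α ι : Type*} [MeasurableSpace α]
    {μ : Measure α} {u : Filter ι} [u.NeBot] [u.IsCountablyGenerated] {g : α → ℝ}
    {h : ι → α → ℝ} {C : ℝ} (hh : ∀ i, Integrable (h i) μ) (hh0 : ∀ i, 0 ≤ᵐ[μ] h i)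
    (hhC : ∀ i, ∫ x, h i x ∂μ ≤ C)
    (hg : ∀ᵐ x ∂μ, ENNReal.ofReal (g x) ≤ liminf (fun i ↦ ENNReal.ofReal (h i x)) u) :
    ∫ x, g x ∂μ ≤ C := by
  obtain ⟨i₀⟩ := u.nonempty_of_neBot
  have hC : 0 ≤ C := (integral_nonneg_of_ae (hh0 i₀)).trans (hhC i₀)
  by_cases hgi : Integrable g μ
  swap
  · exact (integral_undef hgi).trans_le hC
  have hfatou : ∫⁻ x, ENNReal.ofReal (g x) ∂μ ≤ ENNReal.ofReal C :=
    calc ∫⁻ x, ENNReal.ofReal (g x) ∂μ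
        ≤ ∫⁻ x, liminf (fun i ↦ ENNReal.ofReal (h i x)) u ∂μ := lintegral_mono_ae hg
      _ ≤ liminf (fun i ↦ ∫⁻ x, ENNReal.ofReal (h i x) ∂μ) u :=
        lintegral_liminf_le' fun i ↦ (hh i).aemeasurable.ennreal_ofReal
      _ ≤ ENNReal.ofReal C := by
        refine liminf_le_of_frequently_le' (Frequently.of_forall fun i ↦ ?_)
        rw [← ofReal_integral_eq_lintegral_ofReal (hh i) (hh0 i)]
        exact ENNReal.ofReal_le_ofReal (hhC i)
  calc ∫ x, g x ∂μ
      = (∫⁻ x, ENNReal.ofReal (g x) ∂μ).toReal - (∫⁻ x, ENNReal.ofReal (-g x) ∂μ).toReal :=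
        integral_eq_lintegral_pos_part_sub_lintegral_neg_part hgi
    _ ≤ (∫⁻ x, ENNReal.ofReal (g x) ∂μ).toReal := sub_le_self _ ENNReal.toReal_nonneg
    _ ≤ C := ENNReal.toReal_le_of_le_ofReal hC hfatou

theorem smirnov_lemma (f : ℂ → ℂ) (r p : ℝ) (hr : 0 < r) (hp : 0 < p) (hp1 : p < 1)
    (hf : DifferentiableOn ℂ f (Metric.ball (0 : ℂ) r))
    (hre : ∀ z ∈ Metric.ball (0 : ℂ) r, 0 < (f z).re) :
    ∫ φ in (0:ℝ)..(2 * π),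
        Filter.liminf (fun z => ‖f z‖ ^ p)
          (nhdsWithin ((r : ℂ) * Complex.exp ((φ : ℂ) * Complex.I)) (Metric.ball (0 : ℂ) r))
      ≤ (2 * π / Real.cos (π * p / 2)) * ‖f 0‖ ^ p := by
  obtain ⟨ρ, -, hρ, hρr⟩ := exists_seq_strictMono_tendsto' hr
  have hball : ∀ n, closedBall (0 : ℂ) |ρ n| ⊆ ball 0 r := fun n ↦
    closedBall_subset_ball ((abs_of_pos (hρ n).1).trans_lt (hρ n).2)
  have hcircle : ∀ n φ, circleMap 0 (ρ n) φ ∈ ball (0 : ℂ) r := fun n φ ↦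
    hball n (sphere_subset_closedBall (circleMap_mem_sphere' 0 (ρ n) φ))
  have hcont : ∀ n, Continuous fun φ ↦ ‖f (circleMap 0 (ρ n) φ)‖ ^ p := fun n ↦
    ((hf.continuousOn.comp_continuous (continuous_circleMap 0 (ρ n)) (hcircle n)).norm).rpow_const
      fun _ ↦ Or.inr hp.le
  rw [intervalIntegral.integral_of_le two_pi_pos.le]
  refine integral_le_of_ofReal_le_liminf (u := atTop)
    (h := fun n φ ↦ ‖f (circleMap 0 (ρ n) φ)‖ ^ p) (fun n ↦ (hcont n).integrableOn_Ioc)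
    (fun n ↦ ae_of_all _ fun φ ↦ by positivity) (fun n ↦ ?_) (ae_of_all _ fun φ ↦ ?_)
  · rw [← intervalIntegral.integral_of_le two_pi_pos.le]
    exact integral_norm_rpow_circleMap_le (hf.mono (hball n)) (fun z hz ↦ hre z (hball n hz))
      hp.le hp1
  · have hlim : Tendsto (fun n ↦ circleMap 0 (ρ n) φ) atTop
        (𝓝[ball 0 r] ((r : ℂ) * exp ((φ : ℂ) * I))) := by
      refine tendsto_nhdsWithin_iff.2 ⟨?_, Eventually.of_forall fun n ↦ hcircle n φ⟩
      simpa only [circleMap_zero, Function.comp_def] using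
        ((continuous_ofReal.tendsto r).comp hρr).mul_const (exp ((φ : ℂ) * I))
    exact ENNReal.ofReal_liminf_le_liminf_ofReal.trans hlim.liminf_le_liminf_comp
end

section
/- For any t ∈ ℂ and z ∈ ℂ with |z| < r and |t| > r√2, the real part of e^{2i·arg(t)} / (z − t)^2 is strictly positive. -/
open Complex Real

/-! The phase factor is `e^{2i·arg t} = (t / |t|)²`, so the kernel equals `1 / (|t|² (1 - z/t)²)`.
With `u = z/t` we have `|u|² < 1/2`, and on that disc
`Re (1 - u)² = (1 - Re u)² - (Im u)² > (1 - Re u)² + (Re u)² - 1/2 = (2 Re u - 1)² / 2 ≥ 0`;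
since `Re w⁻¹` has the sign of `Re w`, the kernel has positive real part. -/

namespace Complex

theorem exp_arg_mul_I {t : ℂ} (ht : t ≠ 0) : exp (t.arg * I) = t / (‖t‖ : ℂ) := by
  have hnorm : ((‖t‖ : ℝ) : ℂ) ≠ 0 := ofReal_ne_zero.mpr (norm_ne_zero_iff.mpr ht)
  rw [eq_div_iff hnorm, mul_comm, norm_mul_exp_arg_mul_I]

theorem exp_two_arg_mul_I {t : ℂ} (ht : t ≠ 0) :
    exp (2 * t.arg * I) = (t / (‖t‖ : ℂ)) ^ 2 := by
  rw [← exp_arg_mul_I ht, ← exp_nat_mul]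
  push_cast
  ring_nf

theorem re_inv_pos_iff {w : ℂ} : 0 < (w⁻¹).re ↔ 0 < w.re := by
  rcases eq_or_ne w 0 with rfl | hw
  · simp
  · rw [inv_re, div_pos_iff_of_pos_right (normSq_pos.mpr hw)]

theorem re_one_sub_sq_pos {u : ℂ} (hu : 2 * ‖u‖ ^ 2 < 1) : 0 < ((1 - u) ^ 2).re := by
  rw [Complex.sq_norm, normSq_apply] at hu
  simp only [sq, mul_re, sub_re, sub_im, one_re, one_im]
  nlinarith [sq_nonneg (2 * u.re - 1)]

end Complex

theorem re_pos_kernel_far_pole_general (r : ℝ) (t z : ℂ)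
    (hz : ‖z‖ < r) (ht : r * Real.sqrt 2 < ‖t‖) :
    0 < (Complex.exp (2 * (t.arg : ℂ) * Complex.I) / (z - t) ^ 2).re := by
  have hr : 0 ≤ r := (norm_nonneg z).trans hz.le
  have htpos : 0 < ‖t‖ := lt_of_le_of_lt (by positivity) ht
  have ht0 : t ≠ 0 := norm_pos_iff.mp htpos
  have hsmall : 2 * ‖z / t‖ ^ 2 < 1 := by
    have h2r : 2 * ‖z‖ ^ 2 < ‖t‖ ^ 2 :=
      calc 2 * ‖z‖ ^ 2 < 2 * r ^ 2 := by gcongr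
        _ = (r * Real.sqrt 2) ^ 2 := by rw [mul_pow, sq_sqrt zero_le_two, mul_comm]
        _ < ‖t‖ ^ 2 := by gcongr
    rwa [norm_div, div_pow, mul_div_assoc', div_lt_one (by positivity)]
  have hkernel : exp (2 * (t.arg : ℂ) * I) / (z - t) ^ 2
      = ((1 - z / t) ^ 2)⁻¹ / ((‖t‖ ^ 2 : ℝ) : ℂ) := by
    rw [exp_two_arg_mul_I ht0]
    field_simp
    push_cast
    ring
  rw [hkernel, div_ofReal_re]
  exact div_pos (re_inv_pos_iff.mpr (re_one_sub_sq_pos hsmall)) (by positivity)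

theorem re_pos_kernel_far_pole (r : ℝ) (hr : 0 < r) (t z : ℂ)
    (hz : ‖z‖ < r) (ht : r * Real.sqrt 2 < ‖t‖) :
    0 < (Complex.exp (2 * (t.arg : ℂ) * Complex.I) / (z - t) ^ 2).re :=
  re_pos_kernel_far_pole_general r t z hz ht
end

section
/- Let (c_n) and (t_n) be complex sequences with |t_n| → ∞, (t_n) having no finite limit point, and ∑_{n} |c_n|/|t_n|² < ∞. Then for every 0 < p < 1 and every r > 0, ∫₀^{2π} | ∑_{n : |t_n| > r√2} c_n/(re^{iφ} − t_n)² |^p dφ ≤ (8π / cos(πp/2)) · ( ∑_{n : |t_n| > r√2} |c_n|/|t_n|² )^p. -/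
/-!
On the circle `|z| = r`, every pole with `|t_n| > r√2` satisfies
`|z - t_n| ≥ |t_n| - r > (1 - 1/√2) |t_n|`, so each term of the tail is at most
`(2 + √2)² |c_n| / |t_n|²` and the whole tail at most `(2 + √2)² S`, where `S` is the tail of
`∑ |c_n| / |t_n|²`. Integrating the `p`-th power of this uniform bound gives
`2π (2 + √2)^{2p} S^p`, and `(2 + √2)^{2p} cos (πp/2) ≤ 4` for `p ≤ 1`.
-/

open Real

lemma norm_le_two_add_sqrt_two_mul_norm_sub {E : Type*} [SeminormedAddCommGroup E] {z w : E}
    (h : √2 * ‖z‖ ≤ ‖w‖) : ‖w‖ ≤ (2 + √2) * ‖z - w‖ := by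
  have hsq : √2 ^ 2 = 2 := sq_sqrt zero_le_two
  have hdist : ‖w‖ - ‖z‖ ≤ ‖z - w‖ := by
    rw [norm_sub_rev]; exact norm_sub_norm_le w z
  -- `(2 + √2) (‖w‖ - ‖z‖) - ‖w‖ = (1 + √2) (‖w‖ - √2 ‖z‖)`
  nlinarith [sqrt_nonneg 2, norm_nonneg z]

lemma norm_div_sub_sq_le {𝕜 : Type*} [NormedField 𝕜] (c : 𝕜) {z w : 𝕜}
    (h : √2 * ‖z‖ < ‖w‖) : ‖c / (z - w) ^ 2‖ ≤ (2 + √2) ^ 2 * (‖c‖ / ‖w‖ ^ 2) := by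
  have hw : 0 < ‖w‖ := lt_of_le_of_lt (by positivity) h
  have hzw : 0 < ‖z - w‖ := by
    by_contra! h0
    have := norm_le_two_add_sqrt_two_mul_norm_sub h.le
    nlinarith [sqrt_nonneg 2]
  rw [norm_div, norm_pow, mul_div_assoc', div_le_div_iff₀ (by positivity) (by positivity)]
  have hsq : ‖w‖ ^ 2 ≤ (2 + √2) ^ 2 * ‖z - w‖ ^ 2 := by
    rw [← mul_pow]
    exact pow_le_pow_left₀ hw.le (norm_le_two_add_sqrt_two_mul_norm_sub h.le) 2
  nlinarith [norm_nonneg c]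

/- With `K = (2 + √2)²` and `q = 1 - p`: `cos (πp/2) = sin (πq/2) ≤ πq/2`, and
`K ^ q ≥ 1 + 2q + 2q²` because `log K ≥ 2`; the quadratic `8 (1 + 2q + 2q²) - Kπq` has negative discriminant. -/
lemma two_add_sqrt_two_sq_rpow_mul_cos_le_four {p : ℝ} (hp : p ≤ 1) :
    ((2 + √2) ^ 2) ^ p * cos (π * p / 2) ≤ 4 := by
  set K : ℝ := (2 + √2) ^ 2
  set q := 1 - p
  have hq : 0 ≤ q := sub_nonneg.2 hp
  have hK : exp 2 ≤ K ∧ K ≤ 11.66 := by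
    have hsqrt : 1.414 ≤ √2 ∧ √2 ≤ 1.415 := by
      constructor <;> nlinarith [sq_sqrt zero_le_two, sqrt_nonneg 2]
    have hKeq : K = 6 + 4 * √2 := by simp only [K]; ring_nf; rw [sq_sqrt zero_le_two]; ring
    have he : exp 2 = exp 1 ^ 2 := by rw [← exp_nat_mul]; norm_num
    constructor <;> nlinarith [exp_pos 1, exp_one_lt_d9]
  have hK0 : 0 < K := by positivity
  have hlog : 2 ≤ log K := (le_log_iff_exp_le hK0).2 hK.1
  have hcos : cos (π * p / 2) ≤ π * q / 2 := by
    rw [show π * p / 2 = π / 2 - π * q / 2 by ring, cos_pi_div_two_sub]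
    exact sin_le (by positivity)
  have hKq : 1 + 2 * q + 2 * q ^ 2 ≤ K ^ q := by
    rw [rpow_def_of_pos hK0]
    refine le_trans ?_ (quadratic_le_exp_of_nonneg (by positivity))
    nlinarith [mul_le_mul_of_nonneg_left hlog hq]
  have hKp : K ^ p = K / K ^ q := by
    rw [eq_div_iff (by positivity), ← rpow_add hK0]
    simp [q]
  have hKπ : K * π ≤ 36.729 := by nlinarith [pi_lt_d2, pi_pos]
  rw [hKp, div_mul_eq_mul_div, div_le_iff₀ (by positivity)]
  calc K * cos (π * p / 2) ≤ K * (π * q / 2) := by gcongr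
    _ ≤ 4 * (1 + 2 * q + 2 * q ^ 2) := by
      nlinarith [mul_le_mul_of_nonneg_right hKπ hq, sq_nonneg (q - 0.65)]
    _ ≤ 4 * K ^ q := by gcongr

lemma intervalIntegral_norm_tsum_rpow_le {ι E : Type*} [NormedAddCommGroup E] [CompleteSpace E]
    {F : ι → ℝ → E} {u : ι → ℝ} {a b p : ℝ} (hab : a ≤ b) (hp : 0 ≤ p)
    (hF : ∀ i, Continuous (F i)) (hu : Summable u) (hFu : ∀ i x, ‖F i x‖ ≤ u i) :
    ∫ x in a..b, ‖∑' i, F i x‖ ^ p ≤ (b - a) * (∑' i, u i) ^ p := by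
  have hcont : Continuous fun x => ∑' i, F i x := continuous_tsum hF hu hFu
  have hbound (x : ℝ) : ‖∑' i, F i x‖ ≤ ∑' i, u i := tsum_of_norm_bounded hu.hasSum (hFu · x)
  calc ∫ x in a..b, ‖∑' i, F i x‖ ^ p ≤ ∫ _ in a..b, (∑' i, u i) ^ p :=
        intervalIntegral.integral_mono_on hab
          ((hcont.norm.rpow_const fun _ => Or.inr hp).intervalIntegrable _ _)
          intervalIntegrable_const fun x _ => rpow_le_rpow (norm_nonneg _) (hbound x) hp
    _ = (b - a) * (∑' i, u i) ^ p := by rw [intervalIntegral.integral_const, smul_eq_mul]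

open Complex MeasureTheory Real Filter

lemma norm_ofReal_mul_exp_ofReal_mul_I {r : ℝ} (hr : 0 ≤ r) (φ : ℝ) :
    ‖(r : ℂ) * exp (φ * I)‖ = r := by
  rw [norm_mul, norm_exp_ofReal_mul_I, mul_one, norm_real, norm_of_nonneg hr]

section CircleTerm

variable (c w : ℂ) {r : ℝ}

lemma norm_ite_div_circle_sub_sq_le (hr : 0 ≤ r) (φ : ℝ) :
    ‖if r * √2 < ‖w‖ then c / ((r : ℂ) * exp (φ * I) - w) ^ 2 else 0‖
      ≤ (2 + √2) ^ 2 * if r * √2 < ‖w‖ then ‖c‖ / ‖w‖ ^ 2 else 0 := by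
  split_ifs with h
  · exact norm_div_sub_sq_le c (by rwa [norm_ofReal_mul_exp_ofReal_mul_I hr, mul_comm])
  · simp

lemma continuous_ite_div_circle_sub_sq (hr : 0 ≤ r) :
    Continuous fun φ : ℝ => if r * √2 < ‖w‖ then c / ((r : ℂ) * exp (φ * I) - w) ^ 2 else 0 := by
  by_cases h : r * √2 < ‖w‖
  · simp only [h, if_true]
    refine continuous_const.div (by fun_prop) fun φ => pow_ne_zero 2 (sub_ne_zero.2 ?_)
    rintro rfl
    rw [norm_ofReal_mul_exp_ofReal_mul_I hr] at h
    nlinarith [one_lt_sqrt_two]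
  · simp only [h, if_false, continuous_const]

end CircleTerm

theorem tail_estimate_general (c t : ℕ → ℂ)
    (hnat : Summable (fun n => ‖c n‖ / ‖t n‖ ^ 2))
    (p r : ℝ) (hp : 0 < p) (hp1 : p < 1) (hr : 0 < r) :
    ∫ φ in (0:ℝ)..(2 * π),
        ‖∑' n, if r * Real.sqrt 2 < ‖t n‖ then
            c n / ((r : ℂ) * Complex.exp ((φ : ℂ) * Complex.I) - t n) ^ 2 else 0‖ ^ p
      ≤ (8 * π / Real.cos (π * p / 2)) *
          (∑' n, if r * Real.sqrt 2 < ‖t n‖ then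
            ‖c n‖ / ‖t n‖ ^ 2 else 0) ^ p := by
  set S := ∑' n, if r * √2 < ‖t n‖ then ‖c n‖ / ‖t n‖ ^ 2 else 0
  have hg0 (n : ℕ) : 0 ≤ if r * √2 < ‖t n‖ then ‖c n‖ / ‖t n‖ ^ 2 else 0 := by
    split_ifs <;> positivity
  have hg : Summable fun n => if r * √2 < ‖t n‖ then ‖c n‖ / ‖t n‖ ^ 2 else 0 :=
    hnat.of_nonneg_of_le hg0 fun n => by split_ifs <;> [exact le_rfl; positivity]
  have hcos : 0 < Real.cos (π * p / 2) := by
    apply cos_pos_of_mem_Ioo; constructor <;> nlinarith [pi_pos]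
  calc _ ≤ (2 * π - 0) * (∑' n, (2 + √2) ^ 2 *
        if r * √2 < ‖t n‖ then ‖c n‖ / ‖t n‖ ^ 2 else 0) ^ p :=
        intervalIntegral_norm_tsum_rpow_le (by positivity) hp.le
          (fun n => continuous_ite_div_circle_sub_sq (c n) (t n) hr.le) (hg.mul_left _)
          (fun n => norm_ite_div_circle_sub_sq_le (c n) (t n) hr.le)
    _ = 2 * π * S ^ p * ((2 + √2) ^ 2) ^ p := by
      rw [tsum_mul_left, mul_rpow (by positivity) (tsum_nonneg hg0), sub_zero]; ring
    _ ≤ 2 * π * S ^ p * (4 / Real.cos (π * p / 2)) := by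
      gcongr
      exact (le_div_iff₀ hcos).2 (two_add_sqrt_two_sq_rpow_mul_cos_le_four hp1.le)
    _ = (8 * π / Real.cos (π * p / 2)) * S ^ p := by ring

theorem tail_estimate (c t : ℕ → ℂ)
    (hlim : Tendsto (fun n => ‖t n‖) atTop atTop)
    (hcl : ∀ z : ℂ, ¬ MapClusterPt z atTop t)
    (hnat : Summable (fun n => ‖c n‖ / ‖t n‖ ^ 2))
    (p r : ℝ) (hp : 0 < p) (hp1 : p < 1) (hr : 0 < r) :
    ∫ φ in (0:ℝ)..(2 * π),
        ‖∑' n, if r * Real.sqrt 2 < ‖t n‖ then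
            c n / ((r : ℂ) * Complex.exp ((φ : ℂ) * Complex.I) - t n) ^ 2 else 0‖ ^ p
      ≤ (8 * π / Real.cos (π * p / 2)) *
          (∑' n, if r * Real.sqrt 2 < ‖t n‖ then
            ‖c n‖ / ‖t n‖ ^ 2 else 0) ^ p :=
  tail_estimate_general c t hnat p r hp hp1 hr
end

section
/- Let (c_n), (t_n) be complex sequences with |t_n| → ∞, no finite limit points, and ∑_n |c_n|/|t_n|² < ∞. Then for every 0 < p < 1 and r > 0, ∫₀^{2π} | ∑_{n : |t_n| < r/√2} c_n/(re^{iφ} − t_n)² |^p dφ ≤ (8π / cos(πp/2)) · ( (1/r²) ∑_{n : |t_n| < r/√2} |c_n| )^p. -/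
/-!
No cancellation in the sum is needed. Since `‖t n‖ < r / √2`, every pole stays at distance at
least `r - r / √2` from the circle `‖z‖ = r`, and `(r - r / √2)⁻² = (6 + 4√2) / r²`, so the
integrand is bounded pointwise by `((6 + 4√2) / r² · ∑ ‖c n‖) ^ p`. The resulting constant
`2π (6 + 4√2) ^ p` is at most `8π / cos (πp / 2)`: writing `q = 1 - p`, one has
`cos (πp / 2) = sin (πq / 2) ≤ πq / 2`, and `K ^ p · q = K · (q log K) e^{-q log K} / log K`
is controlled by `y e^{-y} ≤ e^{-1}`.
-/

open Real

lemma Real.rpow_mul_cos_pi_mul_div_two_le {K p : ℝ} (hK : 1 < K) (hp : p ≤ 1) :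
    K ^ p * cos (π * p / 2) ≤ π * K * exp (-1) / (2 * log K) := by
  have hq : 0 ≤ 1 - p := by linarith
  have hlog : 0 < log K := log_pos hK
  have hcos : cos (π * p / 2) ≤ π * (1 - p) / 2 := by
    rw [← sin_pi_div_two_sub, show π / 2 - π * p / 2 = π * (1 - p) / 2 by ring]
    exact sin_le (by positivity)
  have hpow : K ^ p = K * exp (-((1 - p) * log K)) := by
    rw [rpow_def_of_pos (by linarith), show log K * p = log K + -((1 - p) * log K) by ring,
      exp_add, exp_log (by linarith)]
  calc K ^ p * cos (π * p / 2) ≤ K ^ p * (π * (1 - p) / 2) := by gcongr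
    _ = π * K / (2 * log K) * ((1 - p) * log K * exp (-((1 - p) * log K))) := by
        rw [hpow]; field_simp
    _ ≤ π * K / (2 * log K) * exp (-1) := by
        gcongr; exact mul_exp_neg_le_exp_neg_one _
    _ = π * K * exp (-1) / (2 * log K) := by ring

lemma six_add_four_mul_sqrt_two_rpow_mul_cos_le {p : ℝ} (hp : p ≤ 1) :
    (6 + 4 * √2) ^ p * cos (π * p / 2) ≤ 4 := by
  have hsqrt_lo : (1.4 : ℝ) < √2 := by
    rw [lt_sqrt (by norm_num)]; norm_num
  have hsqrt_hi : √2 < 1.5 := by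
    rw [sqrt_lt' (by norm_num)]; norm_num
  have hK : (0 : ℝ) < 6 + 4 * √2 := by positivity
  have hlog : 2 ≤ log (6 + 4 * √2) := by
    have he : exp 2 = exp 1 * exp 1 := by rw [← exp_add]; norm_num
    rw [le_log_iff_exp_le hK, he]
    nlinarith [exp_one_lt_d9, exp_pos 1]
  refine (rpow_mul_cos_pi_mul_div_two_le (by linarith) hp).trans ?_
  rw [div_le_iff₀ (by positivity)]
  calc π * (6 + 4 * √2) * exp (-1) ≤ 3.15 * 12 * 0.37 := by
        gcongr
        · linarith [pi_lt_d2]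
        · linarith
        · linarith [exp_neg_one_lt_d9]
    _ ≤ 4 * (2 * log (6 + 4 * √2)) := by linarith

lemma inv_sub_div_sqrt_two_sq (r : ℝ) :
    ((r - r / √2) ^ 2)⁻¹ = (6 + 4 * √2) * (1 / r ^ 2) := by
  rcases eq_or_ne r 0 with rfl | hr
  · simp
  have h2 : √2 ^ 2 = 2 := sq_sqrt zero_le_two
  refine inv_eq_of_mul_eq_one_right ?_
  field_simp
  linear_combination (4 * √2 - 3) * h2

open Complex MeasureTheory Filter

lemma Filter.Tendsto.finite_setOf_lt {α : Type*} [LinearOrder α] {f : ℕ → α}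
    (hf : Tendsto f atTop atTop) (R : α) :
    {n | f n < R}.Finite := by
  have h : ∀ᶠ n in cofinite, R ≤ f n := Nat.cofinite_eq_atTop ▸ hf.eventually_ge_atTop R
  simpa only [not_le] using eventually_cofinite.mp h

lemma norm_div_sq_sub_le {𝕜 : Type*} [NormedField 𝕜] (c z t : 𝕜) {ρ : ℝ} (ht : ‖t‖ ≤ ρ)
    (hρ : ρ < ‖z‖) : ‖c / (z - t) ^ 2‖ ≤ ‖c‖ / (‖z‖ - ρ) ^ 2 := by
  have hdist : ‖z‖ - ρ ≤ ‖z - t‖ := by linarith [norm_sub_norm_le z t]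
  rw [norm_div, norm_pow]
  gcongr

lemma norm_tsum_ite_div_sq_sub_le {𝕜 : Type*} [NormedField 𝕜] (c t : ℕ → 𝕜) (z : 𝕜) {ρ : ℝ}
    (hfin : {n | ‖t n‖ < ρ}.Finite) (hρ : ρ < ‖z‖) :
    ‖∑' n, if ‖t n‖ < ρ then c n / (z - t n) ^ 2 else 0‖
      ≤ (∑' n, if ‖t n‖ < ρ then ‖c n‖ else 0) / (‖z‖ - ρ) ^ 2 := by
  have hsum : Summable fun n => if ‖t n‖ < ρ then ‖c n‖ else 0 :=
    summable_of_ne_finset_zero (s := hfin.toFinset) fun n hn => by simp_all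
  refine tsum_of_norm_bounded (hsum.hasSum.div_const _) fun n => ?_
  split_ifs with hn
  · exact norm_div_sq_sub_le _ _ _ hn.le hρ
  · simp

lemma norm_tsum_ite_div_sq_sub_le_of_norm_eq {c t : ℕ → ℂ} {z : ℂ} {r : ℝ} (hr : 0 < r)
    (hz : ‖z‖ = r) (hfin : {n | ‖t n‖ < r / √2}.Finite) :
    ‖∑' n, if ‖t n‖ < r / √2 then c n / (z - t n) ^ 2 else 0‖
      ≤ (6 + 4 * √2) * (1 / r ^ 2 * ∑' n, if ‖t n‖ < r / √2 then ‖c n‖ else 0) := by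
  have hbound := norm_tsum_ite_div_sq_sub_le c t z hfin
    (by rw [hz]; exact div_lt_self hr one_lt_sqrt_two)
  rwa [hz, div_eq_inv_mul _ ((r - r / √2) ^ 2), inv_sub_div_sqrt_two_sq, mul_assoc] at hbound

theorem start_estimate_general (c t : ℕ → ℂ)
    (hlim : Tendsto (fun n => ‖t n‖) atTop atTop)
    (p r : ℝ) (hp : 0 < p) (hp1 : p < 1) (hr : 0 < r) :
    ∫ φ in (0:ℝ)..(2 * π),
        ‖∑' n, if ‖t n‖ < r / Real.sqrt 2 then
            c n / ((r : ℂ) * Complex.exp ((φ : ℂ) * Complex.I) - t n) ^ 2 else 0‖ ^ p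
      ≤ (8 * π / Real.cos (π * p / 2)) *
          ((1 / r ^ 2) * ∑' n, if ‖t n‖ < r / Real.sqrt 2 then
            ‖c n‖ else 0) ^ p := by
  set M := 1 / r ^ 2 * ∑' n, if ‖t n‖ < r / √2 then ‖c n‖ else 0
  have hM : 0 ≤ M := mul_nonneg (by positivity) (tsum_nonneg fun n => by split_ifs <;> positivity)
  have hpoint (φ : ℝ) : ‖‖∑' n, if ‖t n‖ < r / √2 then
      c n / ((r : ℂ) * Complex.exp ((φ : ℂ) * Complex.I) - t n) ^ 2 else 0‖ ^ p‖
        ≤ ((6 + 4 * √2) * M) ^ p := by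
    rw [norm_of_nonneg (by positivity)]
    gcongr
    exact norm_tsum_ite_div_sq_sub_le_of_norm_eq hr (by simp [norm_exp_ofReal_mul_I, hr.le])
      (hlim.finite_setOf_lt _)
  have hcos : 0 < Real.cos (π * p / 2) :=
    cos_pos_of_mem_Ioo ⟨by nlinarith [pi_pos], by nlinarith [pi_pos]⟩
  calc _ ≤ ((6 + 4 * √2) * M) ^ p * |2 * π - 0| :=
        (le_norm_self _).trans (intervalIntegral.norm_integral_le_of_norm_le_const
          fun φ _ => hpoint φ)
    _ = 2 * π * (6 + 4 * √2) ^ p * M ^ p := by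
        rw [mul_rpow (by positivity) hM, sub_zero, abs_of_pos (by positivity)]; ring
    _ ≤ 8 * π / Real.cos (π * p / 2) * M ^ p := by
        gcongr
        rw [le_div_iff₀ hcos]
        nlinarith [pi_pos, six_add_four_mul_sqrt_two_rpow_mul_cos_le hp1.le]

theorem start_estimate (c t : ℕ → ℂ)
    (hlim : Tendsto (fun n => ‖t n‖) atTop atTop)
    (hcl : ∀ z : ℂ, ¬ MapClusterPt z atTop t)
    (hnat : Summable (fun n => ‖c n‖ / ‖t n‖ ^ 2))
    (p r : ℝ) (hp : 0 < p) (hp1 : p < 1) (hr : 0 < r) :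
    ∫ φ in (0:ℝ)..(2 * π),
        ‖∑' n, if ‖t n‖ < r / Real.sqrt 2 then
            c n / ((r : ℂ) * Complex.exp ((φ : ℂ) * Complex.I) - t n) ^ 2 else 0‖ ^ p
      ≤ (8 * π / Real.cos (π * p / 2)) *
          ((1 / r ^ 2) * ∑' n, if ‖t n‖ < r / Real.sqrt 2 then
            ‖c n‖ else 0) ^ p :=
  start_estimate_general c t hlim p r hp hp1 hr
end

section
/- For any t ∈ ℂ, r > 0, and 0 < p < 1/2: ∫₀^{2π} dφ / |re^{iφ} − t|^{2p} ≤ (2π / (1 − 2p)) · (1 / r^{2p}). -/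
/-!
Rotating the circle by `arg t` moves `t` onto the positive real axis, where the distance from
`r e^{iφ}` to it is at least the height `r |sin φ|`. So the integral is at most
`r^{-2p} ∫₀^{2π} |sin φ|^{-2p} dφ`, and by the symmetries of `|sin|` this is four times the
integral over `[0, π/2]`, where Jordan's inequality `sin φ ≥ 2φ/π` reduces it to
`∫₀^{π/2} (2φ/π)^{-2p} dφ = (π/2) / (1 - 2p)`.
-/

open Complex MeasureTheory Real

section Reflection
variable {E : Type*} [NormedAddCommGroup E] {f : ℝ → E} {a : ℝ}

lemma IntervalIntegrable.reflect_of_symm (hf : IntervalIntegrable f volume 0 a)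
    (hsymm : ∀ x, f (2 * a - x) = f x) : IntervalIntegrable f volume a (2 * a) := by
  have hreflect := (hf.comp_sub_left (2 * a)).symm
  simp only [hsymm] at hreflect
  rwa [sub_zero, two_mul, add_sub_cancel_right, ← two_mul] at hreflect

lemma integral_zero_two_mul_of_symm [NormedSpace ℝ E] (hf : IntervalIntegrable f volume 0 a)
    (hsymm : ∀ x, f (2 * a - x) = f x) :
    ∫ x in 0..2 * a, f x = (2 : ℝ) • ∫ x in 0..a, f x := by
  have hreflect := intervalIntegral.integral_comp_sub_left (a := 0) (b := a) f (2 * a)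
  simp only [hsymm] at hreflect
  rw [sub_zero, two_mul, add_sub_cancel_right, ← two_mul] at hreflect
  rw [← intervalIntegral.integral_add_adjacent_intervals hf (hf.reflect_of_symm hsymm),
    ← hreflect, two_smul]

end Reflection

lemma Function.Periodic.intervalIntegral_comp_add_right {E : Type*} [NormedAddCommGroup E]
    [NormedSpace ℝ E] {f : ℝ → E} {T : ℝ} (hf : Function.Periodic f T) (d : ℝ) :
    ∫ x in 0..T, f (x + d) = ∫ x in 0..T, f x := by
  rw [intervalIntegral.integral_comp_add_right, zero_add, add_comm T,
    hf.intervalIntegral_add_eq d 0, zero_add]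

lemma periodic_comp_exp_ofReal_mul_I {α : Type*} (g : ℂ → α) :
    Function.Periodic (fun φ : ℝ => g (exp (φ * I))) (2 * π) := fun φ => by
  simpa using congrArg g (exp_mul_I_periodic φ)

lemma ae_sin_ne_zero : ∀ᵐ x : ℝ, Real.sin x ≠ 0 := by
  refine measure_mono_null (fun x hx => ?_)
    ((Set.countable_range fun n : ℤ => (n : ℝ) * π).measure_zero _)
  exact Real.sin_eq_zero_iff.1 (not_not.1 hx)

section SinePower
variable {s : ℝ}

lemma abs_sin_rpow_neg_le (hs : 0 ≤ s) {x : ℝ} (hx₀ : 0 < x) (hx : x ≤ π / 2) :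
    |Real.sin x| ^ (-s) ≤ (2 / π * x) ^ (-s) := by
  have hlow : 2 / π * x ≤ Real.sin x := mul_le_sin hx₀.le hx
  have hpos : 0 < 2 / π * x := by positivity
  rw [abs_of_pos (hpos.trans_le hlow)]
  exact Real.rpow_le_rpow_of_nonpos hpos hlow (neg_nonpos.2 hs)

lemma intervalIntegrable_two_div_pi_mul_rpow_neg (hs : s < 1) :
    IntervalIntegrable (fun x : ℝ => (2 / π * x) ^ (-s)) volume 0 (π / 2) := by
  have h := (intervalIntegral.intervalIntegrable_rpow' (a := 0) (b := 1) (r := -s)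
    (by linarith)).comp_mul_left (c := 2 / π)
  rwa [zero_div, one_div_div] at h

lemma integral_two_div_pi_mul_rpow_neg (hs : s < 1) :
    ∫ x in (0 : ℝ)..π / 2, (2 / π * x) ^ (-s) = π / 2 / (1 - s) := by
  rw [intervalIntegral.integral_comp_mul_left (fun x => x ^ (-s)) (by positivity),
    integral_rpow (by left; linarith), div_mul_div_cancel₀ pi_ne_zero, div_self two_ne_zero,
    Real.one_rpow, mul_zero, Real.zero_rpow (by linarith), inv_div, smul_eq_mul, neg_add_eq_sub]
  ring

lemma intervalIntegrable_abs_sin_rpow_neg_zero_pi_div_two (hs₀ : 0 ≤ s) (hs₁ : s < 1) :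
    IntervalIntegrable (fun x => |Real.sin x| ^ (-s)) volume 0 (π / 2) := by
  refine (intervalIntegrable_two_div_pi_mul_rpow_neg hs₁).mono_fun'
    (by fun_prop : Measurable fun x => |Real.sin x| ^ (-s)).aestronglyMeasurable ?_
  rw [Set.uIoc_of_le (by positivity)]
  refine ae_restrict_of_forall_mem measurableSet_Ioc fun x hx => ?_
  dsimp only
  rw [Real.norm_of_nonneg (by positivity)]
  exact abs_sin_rpow_neg_le hs₀ hx.1 hx.2

lemma integral_abs_sin_rpow_neg_zero_pi_div_two_le (hs₀ : 0 ≤ s) (hs₁ : s < 1) :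
    ∫ x in (0 : ℝ)..π / 2, |Real.sin x| ^ (-s) ≤ π / 2 / (1 - s) := by
  rw [← integral_two_div_pi_mul_rpow_neg hs₁]
  exact intervalIntegral.integral_mono_on_of_le_Ioo (by positivity)
    (intervalIntegrable_abs_sin_rpow_neg_zero_pi_div_two hs₀ hs₁)
    (intervalIntegrable_two_div_pi_mul_rpow_neg hs₁)
    fun x hx => abs_sin_rpow_neg_le hs₀ hx.1 hx.2.le

lemma abs_sin_rpow_neg_pi_sub (x : ℝ) :
    |Real.sin (2 * (π / 2) - x)| ^ (-s) = |Real.sin x| ^ (-s) := by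
  rw [mul_div_cancel₀ π two_ne_zero, Real.sin_pi_sub]

lemma abs_sin_rpow_neg_two_pi_sub (x : ℝ) :
    |Real.sin (2 * π - x)| ^ (-s) = |Real.sin x| ^ (-s) := by
  rw [Real.sin_two_pi_sub, abs_neg]

lemma intervalIntegrable_abs_sin_rpow_neg_zero_pi (hs₀ : 0 ≤ s) (hs₁ : s < 1) :
    IntervalIntegrable (fun x => |Real.sin x| ^ (-s)) volume 0 π := by
  have hquarter := intervalIntegrable_abs_sin_rpow_neg_zero_pi_div_two hs₀ hs₁
  have hhalf := hquarter.trans (hquarter.reflect_of_symm abs_sin_rpow_neg_pi_sub)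
  rwa [mul_div_cancel₀ π two_ne_zero] at hhalf

lemma intervalIntegrable_abs_sin_rpow_neg_zero_two_pi (hs₀ : 0 ≤ s) (hs₁ : s < 1) :
    IntervalIntegrable (fun x => |Real.sin x| ^ (-s)) volume 0 (2 * π) :=
  have hhalf := intervalIntegrable_abs_sin_rpow_neg_zero_pi hs₀ hs₁
  hhalf.trans (hhalf.reflect_of_symm abs_sin_rpow_neg_two_pi_sub)

lemma integral_abs_sin_rpow_neg_zero_two_pi_le (hs₀ : 0 ≤ s) (hs₁ : s < 1) :
    ∫ x in 0..2 * π, |Real.sin x| ^ (-s) ≤ 2 * π / (1 - s) := by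
  have hhalf : ∫ x in 0..π, |Real.sin x| ^ (-s) = 2 * ∫ x in 0..π / 2, |Real.sin x| ^ (-s) := by
    have h := integral_zero_two_mul_of_symm
      (intervalIntegrable_abs_sin_rpow_neg_zero_pi_div_two hs₀ hs₁) abs_sin_rpow_neg_pi_sub
    rwa [mul_div_cancel₀ π two_ne_zero] at h
  rw [integral_zero_two_mul_of_symm (intervalIntegrable_abs_sin_rpow_neg_zero_pi hs₀ hs₁)
    abs_sin_rpow_neg_two_pi_sub, hhalf, smul_eq_mul]
  have hquarter := integral_abs_sin_rpow_neg_zero_pi_div_two_le hs₀ hs₁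
  have hs : 0 < 1 - s := by linarith
  calc 2 * (2 * ∫ x in 0..π / 2, |Real.sin x| ^ (-s)) ≤ 2 * (2 * (π / 2 / (1 - s))) := by
        gcongr
    _ = 2 * π / (1 - s) := by field_simp

end SinePower

lemma abs_mul_sin_le_norm_mul_exp_sub (r x : ℝ) (t : ℂ) :
    |r * Real.sin x| ≤ ‖(r : ℂ) * exp (↑(x + t.arg) * I) - t‖ := by
  have hrotate : ((r : ℂ) * exp (x * I) - ‖t‖) * exp (t.arg * I)
      = (r : ℂ) * exp (↑(x + t.arg) * I) - t := by
    rw [sub_mul, norm_mul_exp_arg_mul_I, mul_assoc, ← Complex.exp_add]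
    push_cast
    ring_nf
  have him : ((r : ℂ) * exp (x * I) - ‖t‖).im = r * Real.sin x := by
    simp [Complex.exp_mul_I, ← Complex.ofReal_cos, ← Complex.ofReal_sin]
  rw [← hrotate, norm_mul, norm_exp_ofReal_mul_I, mul_one, ← him]
  exact abs_im_le_norm _

lemma one_div_norm_mul_exp_sub_rpow_le {r s x : ℝ} (t : ℂ) (hr : 0 < r) (hs : 0 ≤ s)
    (hx : Real.sin x ≠ 0) :
    1 / ‖(r : ℂ) * exp (↑(x + t.arg) * I) - t‖ ^ s ≤ r ^ (-s) * |Real.sin x| ^ (-s) := by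
  have hlow := abs_mul_sin_le_norm_mul_exp_sub r x t
  have hpos : 0 < |r * Real.sin x| := abs_pos.2 (mul_ne_zero hr.ne' hx)
  calc 1 / ‖(r : ℂ) * exp (↑(x + t.arg) * I) - t‖ ^ s
      ≤ 1 / |r * Real.sin x| ^ s := by gcongr
    _ = r ^ (-s) * |Real.sin x| ^ (-s) := by
      rw [abs_mul, abs_of_pos hr, Real.mul_rpow hr.le (abs_nonneg _), Real.rpow_neg hr.le,
        Real.rpow_neg (abs_nonneg _), one_div, mul_inv]

theorem integral_one_div_norm_mul_exp_sub_rpow_le (t : ℂ) {r s : ℝ} (hr : 0 < r)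
    (hs₀ : 0 ≤ s) (hs₁ : s < 1) :
    ∫ φ in 0..2 * π, 1 / ‖(r : ℂ) * exp (φ * I) - t‖ ^ s ≤ 2 * π / (1 - s) * (1 / r ^ s) := by
  have hperiodic := periodic_comp_exp_ofReal_mul_I fun z => 1 / ‖(r : ℂ) * z - t‖ ^ s
  rw [← hperiodic.intervalIntegral_comp_add_right t.arg]
  -- The bound holds only where `sin x ≠ 0`: at the zeros, `|sin x| ^ (-s)` is the junk value `0`.
  have hdominated : ∫ x in 0..2 * π, 1 / ‖(r : ℂ) * exp (↑(x + t.arg) * I) - t‖ ^ s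
      ≤ ∫ x in 0..2 * π, r ^ (-s) * |Real.sin x| ^ (-s) := by
    have h2π : 0 ≤ 2 * π := by positivity
    rw [intervalIntegral.integral_of_le h2π, intervalIntegral.integral_of_le h2π]
    refine integral_mono_of_nonneg (Filter.Eventually.of_forall fun x => by positivity)
      ((intervalIntegrable_abs_sin_rpow_neg_zero_two_pi hs₀ hs₁).const_mul _).1
      (ae_restrict_of_ae (ae_sin_ne_zero.mono fun x hx => ?_))
    exact one_div_norm_mul_exp_sub_rpow_le t hr hs₀ hx
  refine hdominated.trans ?_
  rw [intervalIntegral.integral_const_mul, Real.rpow_neg hr.le, ← one_div, mul_comm]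
  gcongr
  exact integral_abs_sin_rpow_neg_zero_two_pi_le hs₀ hs₁

theorem kernel_integral_estimate (t : ℂ) (r p : ℝ) (hr : 0 < r)
    (hp : 0 < p) (hp2 : p < 1 / 2) :
    ∫ φ in (0:ℝ)..(2 * π),
        1 / ‖(r : ℂ) * Complex.exp ((φ : ℂ) * Complex.I) - t‖ ^ (2 * p)
      ≤ (2 * π / (1 - 2 * p)) * (1 / r ^ (2 * p)) :=
  integral_one_div_norm_mul_exp_sub_rpow_le t hr (by linarith) (by linarith)
end
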